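/- Let $\Sigma$ be a compact surface with nonempty boundary, let $\delta > 0$ be small enough that $\Omega := \overline{\Sigma \setminus \widetilde\Sigma}$ (where $\widetilde\Sigma = \{x : \mathrm{dist}(x,\partial\Sigma)\ge\delta\}$) is homeomorphic to $\partial\Sigma \times [0,1]$ with $\partial\Sigma$ corresponding to $\partial\Sigma\times\{1\}$. Fix $x_0 \in \partial\Sigma$. Then the map $\pi: \Sigma \to (\partial\Sigma)_2$ defined by $\pi(x) = \delta_{x_0}$ for $x \in \widetilde\Sigma$, $\pi(x) = (1-t)\delta_{x_0} + t\delta_y$ for $x$ corresponding to $(y,t) \in \partial\Sigma\times[0,1]$, and $\pi(x) = \delta_x$ for $x \in \partial\Sigma$, is well-defined and continuous, where $(\partial\Sigma)_2$ is the space of probability measures supported on at most 2 points of $\partial\Sigma$ with the Lipschitz-dual metric, and $\pi$ restricts to $x \mapsto \delta_x$ on $\partial\Sigma$. -/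

import Mathlib

/-!
On the closed collar `Om ≅ ∂Σ × [0,1]` the map is `(y, t) ↦ (1 - t) δ_{x₀} + t δ_y`, which is
jointly continuous into the weak topology because integrating a bounded continuous function
against it gives `(1 - t) f x₀ + t f y`. At `t = 0` this is `δ_{x₀}`, so it agrees with the
constant map on the closed set `Tld`, and a function continuous on each of two closed sets
covering the space is continuous. At `t = 1` it is `δ_y`, which is the value on `∂Σ`.
-/

open MeasureTheory Set
open scoped NNReal ENNReal

namespace MeasureTheory

variable {X : Type*} [MeasurableSpace X]

noncomputable def diracMix (x y : X) (t : Icc (0 : ℝ) 1) : ProbabilityMeasure X :=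
  ⟨ENNReal.ofReal (1 - t) • Measure.dirac x + ENNReal.ofReal t • Measure.dirac y, by
    constructor
    simp [← ENNReal.ofReal_add (sub_nonneg.2 t.2.2) t.2.1]⟩

lemma diracMix_toMeasure (x y : X) (t : Icc (0 : ℝ) 1) :
    (diracMix x y t).toMeasure
      = ENNReal.ofReal (1 - t) • Measure.dirac x + ENNReal.ofReal t • Measure.dirac y :=
  rfl

lemma diracMix_of_coe_eq_zero (x y : X) {t : Icc (0 : ℝ) 1} (ht : (t : ℝ) = 0) :
    diracMix x y t = diracProba x :=
  Subtype.ext <| by simp [diracMix_toMeasure, diracProba, ht]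

lemma diracMix_one (x y : X) : diracMix x y ⟨1, right_mem_Icc.2 zero_le_one⟩ = diracProba y :=
  Subtype.ext <| by simp [diracMix_toMeasure, diracProba]

lemma lintegral_diracMix (x y : X) (t : Icc (0 : ℝ) 1) {f : X → ℝ≥0} (hf : Measurable f) :
    ∫⁻ ω, f ω ∂(diracMix x y t : Measure X)
      = (((1 - t : ℝ).toNNReal * f x + (t : ℝ).toNNReal * f y : ℝ≥0) : ℝ≥0∞) := by
  have hf' : Measurable fun ω ↦ (f ω : ℝ≥0∞) := measurable_coe_nnreal_ennreal.comp hf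
  rw [diracMix_toMeasure, lintegral_add_measure, lintegral_smul_measure, lintegral_smul_measure,
    lintegral_dirac' _ hf', lintegral_dirac' _ hf']
  rfl

lemma continuous_diracMix [TopologicalSpace X] [OpensMeasurableSpace X] :
    Continuous fun p : X × X × Icc (0 : ℝ) 1 ↦ diracMix p.1 p.2.1 p.2.2 := by
  refine continuous_iff_continuousAt.2 fun p ↦
    ProbabilityMeasure.tendsto_iff_forall_lintegral_tendsto.2 fun f ↦ ?_
  simp only [lintegral_diracMix _ _ _ f.continuous.measurable]
  exact (ENNReal.continuous_coe.comp (by fun_prop)).continuousAt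

end MeasureTheory

lemma continuous_dite_of_isClosed_of_eq_const {S Y : Type*} [TopologicalSpace S]
    [TopologicalSpace Y] {T O : Set S} (hT : IsClosed T) (hO : IsClosed O) (hcover : T ∪ O = univ)
    [DecidablePred (· ∈ O)] {g : O → Y} (hg : Continuous g) {c : Y}
    (hgc : ∀ x (hx : x ∈ O), x ∈ T → g ⟨x, hx⟩ = c) :
    Continuous fun x ↦ if hx : x ∈ O then g ⟨x, hx⟩ else c := by
  rw [← continuousOn_univ, ← hcover]
  refine ContinuousOn.union_of_isClosed ?_ ?_ hT hO
  · refine (continuousOn_const (c := c)).congr fun x hxT ↦ ?_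
    split_ifs with hxO
    exacts [hgc x hxO hxT, rfl]
  · rw [continuousOn_iff_continuous_domRestrict]
    convert hg with x
    simp

/-- Proposition 4.11, key construction: if a collar `Ω` of `∂Σ` is homeomorphic
to `∂Σ × [0,1]` (via `e`, with `∂Σ` corresponding to `∂Σ × {1}` and points of
`Ω` lying in `Σ̃` only at parameter `t = 0`), then the map
`π : Σ → (∂Σ)₂`, `π(x) = δ_{x₀}` on `Σ̃`, `π(e(y,t)) = (1-t)δ_{x₀} + tδ_y`,
`π(x) = δ_x` on `∂Σ`, is well-defined and continuous into the space of
probability measures supported on at most two points of `∂Σ`. -/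
theorem stmt17 {S : Type*} [TopologicalSpace S]
    [MeasurableSpace S] [BorelSpace S]
    (Bd Tld Om : Set S) (hTld : IsClosed Tld)
    (hOm : IsClosed Om) (hcover : Tld ∪ Om = Set.univ)
    (e : (Bd × Set.Icc (0 : ℝ) 1) ≃ₜ Om)
    (he1 : ∀ y : Bd, ((e (y, ⟨1, by norm_num⟩) : Om) : S) = (y : S))
    (heT : ∀ (y : Bd) (t : Set.Icc (0 : ℝ) 1),
      ((e (y, t) : Om) : S) ∈ Tld → (t : ℝ) = 0)
    (x0 : Bd) :
    ∃ Pi : C(S, ProbabilityMeasure Bd),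
      (∀ x ∈ Tld, (Pi x).toMeasure = Measure.dirac x0) ∧
      (∀ (y : Bd) (t : Set.Icc (0 : ℝ) 1),
        (Pi ((e (y, t) : Om) : S)).toMeasure
          = ENNReal.ofReal (1 - (t : ℝ)) • Measure.dirac x0
            + ENNReal.ofReal (t : ℝ) • Measure.dirac y) ∧
      (∀ (x : S) (hx : x ∈ Bd),
        (Pi x).toMeasure = Measure.dirac (⟨x, hx⟩ : Bd)) ∧
      (∀ x : S, ∃ (a : ℝ) (y z : Bd), 0 ≤ a ∧ a ≤ 1 ∧
        (Pi x).toMeasure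
          = ENNReal.ofReal (1 - a) • Measure.dirac y
            + ENNReal.ofReal a • Measure.dirac z) := by
  classical
  let g : Om → ProbabilityMeasure Bd := fun p ↦ diracMix x0 (e.symm p).1 (e.symm p).2
  have hg : Continuous g :=
    (continuous_diracMix.comp ((continuous_const (y := x0)).prodMk e.symm.continuous) :)
  have hgT : ∀ x (hx : x ∈ Om), x ∈ Tld → g ⟨x, hx⟩ = diracProba x0 := fun x hx hxT ↦
    diracMix_of_coe_eq_zero _ _ <| heT (e.symm ⟨x, hx⟩).1 (e.symm ⟨x, hx⟩).2 <| by simpa using hxT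
  let F : C(S, ProbabilityMeasure Bd) :=
    ⟨_, continuous_dite_of_isClosed_of_eq_const hTld hOm hcover hg hgT⟩
  have hF_collar : ∀ y t, F (e (y, t)) = diracMix x0 y t := by simp [F, g]
  have hF_Tld : ∀ x ∈ Tld, F x = diracProba x0 := fun x hxT ↦ by
    change dite _ _ _ = _
    split_ifs with hx
    exacts [hgT x hx hxT, rfl]
  refine ⟨F, fun x hxT ↦ congrArg Subtype.val (hF_Tld x hxT),
    fun y t ↦ congrArg Subtype.val (hF_collar y t), fun x hx ↦ ?_, fun x ↦ ?_⟩
  · have h := hF_collar ⟨x, hx⟩ ⟨1, right_mem_Icc.2 zero_le_one⟩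
    rw [he1, diracMix_one] at h
    rw [h]
    rfl
  · rcases (hcover ▸ mem_univ x : x ∈ Tld ∪ Om) with hxT | hx
    · refine ⟨0, x0, x0, le_rfl, zero_le_one, ?_⟩
      rw [hF_Tld x hxT, ← diracMix_of_coe_eq_zero x0 x0 (t := ⟨0, left_mem_Icc.2 zero_le_one⟩) rfl]
      rfl
    · obtain ⟨⟨y, t⟩, hyt⟩ := e.surjective ⟨x, hx⟩
      rw [show x = e (y, t) by rw [hyt]]
      exact ⟨t, x0, y, t.2.1, t.2.2, congrArg Subtype.val (hF_collar y t)⟩
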